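/- arXiv:2206.14668 — 2 statements merged into one kernel-verified Lean document; each statement's English description precedes it below -/
import Mathlib

section
/- Let μ, γ₁, γ₂ ∈ ℝ³ with ‖γ₁‖ = ‖γ₂‖ = 1, let κ, α ∈ ℝ, and define u : ℝ³ → ℝ by u(x) = κ⟨μ, x⟩ + α(⟨γ₁, x⟩² − ⟨γ₂, x⟩²) (the log unnormalized Kent density). Then for every x ∈ ℝ³ with ‖x‖ = 1, the Laplace–Beltrami operator applied to u satisfies Δ_M u(x) = −2κ⟨μ, x⟩ − 6α(⟨γ₁, x⟩² − ⟨γ₂, x⟩²), where Δ_M u(x) := tr(P(x)·J(x)), P(y) = I₃ − yyᵀ, and J(x) is the Jacobian at x of the map y ↦ P(y)∇u(y). -/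
open Real
open scoped RealInnerProductSpace

noncomputable section

/-- Euclidean 3-space. -/
abbrev E3 : Type := EuclideanSpace ℝ (Fin 3)

/-- The orthogonal projection matrix `P(x) = I₃ - x xᵀ` applied to a vector `v`. -/
def sphProj (x v : E3) : E3 := v - (⟪x, v⟫) • x

/-- `tr (P(x) ⬝ J(x))` where `J(x)` is the Jacobian matrix at `x` of `F : ℝ³ → ℝ³`
(using symmetry of `P(x)`: `tr (P J) = ∑ i ⟪P eᵢ, J eᵢ⟫`). -/
def trProjJac (F : E3 → E3) (x : E3) : ℝ :=
  ∑ i : Fin 3, ⟪sphProj x (EuclideanSpace.single i 1), fderiv ℝ F x (EuclideanSpace.single i 1)⟫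

/-- The Laplace–Beltrami operator on the unit sphere `S² ⊂ ℝ³`:
`Δ_M u (x) = tr (P(x) ⬝ J(x))` where `J(x)` is the Jacobian at `x` of `y ↦ P(y) ∇u(y)`. -/
def lapBel (u : E3 → ℝ) (x : E3) : ℝ :=
  trProjJac (fun y => sphProj y (gradient u y)) x

/-! On the unit sphere, `tr (P(x) J) = tr J - ⟪x, J x⟫` for any `J`, and differentiating
`y ↦ ∇u(y) - ⟪y, ∇u(y)⟫ y` turns this into `Δ_M u(x) = tr H - 2 ⟪x, ∇u(x)⟫ - ⟪x, H x⟫`,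
where `H` is the derivative of `∇u` at `x` (the `2` is `dim - 1`). The Kent log density is
quadratic: `∇u(y) = κ μ + H y` with the constant Hessian `H = 2α (γ₁ γ₁ᵀ - γ₂ γ₂ᵀ)`, which is
traceless because `γ₁, γ₂` are unit vectors, and `⟪x, H x⟫ = 2α (⟪γ₁, x⟫² - ⟪γ₂, x⟫²)`. -/

open InnerProductSpace

theorem OrthonormalBasis.sum_inner_sub_inner_smul_apply {ι E : Type*} [Fintype ι]
    [NormedAddCommGroup E] [InnerProductSpace ℝ E] (b : OrthonormalBasis ι ℝ E) (x : E)
    (T : E →ₗ[ℝ] E) :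
    ∑ i, ⟪b i - ⟪x, b i⟫ • x, T (b i)⟫ = LinearMap.trace ℝ E T - ⟪x, T x⟫ := by
  have hexpand : ∑ i, ⟪x, b i⟫ * ⟪x, T (b i)⟫ = ⟪x, T x⟫ := by
    simpa [inner_sum, inner_smul_right, real_inner_comm, mul_comm] using
      congrArg (fun v => ⟪x, T v⟫) (b.sum_repr' x)
  simp only [inner_sub_left, real_inner_smul_left, Finset.sum_sub_distrib, hexpand,
    T.trace_eq_sum_inner b]

theorem trProjJac_eq_trace_sub (F : E3 → E3) (x : E3) :
    trProjJac F x = LinearMap.trace ℝ E3 (fderiv ℝ F x) - ⟪x, fderiv ℝ F x x⟫ := by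
  have h := (EuclideanSpace.basisFun (Fin 3) ℝ).sum_inner_sub_inner_smul_apply x (fderiv ℝ F x)
  simp only [EuclideanSpace.basisFun_apply] at h
  exact h

theorem hasFDerivAt_sphProj {G : E3 → E3} {H : E3 →L[ℝ] E3} {x : E3} (hG : HasFDerivAt G H x) :
    HasFDerivAt (fun y => sphProj y (G y))
      (H - ⟪x, G x⟫ • ContinuousLinearMap.id ℝ E3 - rankOne ℝ x (G x)
        - ((innerSL ℝ x).comp H).smulRight x) x := by
  refine (hG.sub (((hasFDerivAt_id x).inner ℝ hG).smul (hasFDerivAt_id x))).congr_fderiv ?_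
  ext v : 1
  simp only [id_eq, sub_apply, add_apply, smul_apply, ContinuousLinearMap.id_apply,
    ContinuousLinearMap.smulRight_apply, ContinuousLinearMap.comp_apply,
    ContinuousLinearMap.prod_apply, fderivInnerCLM_apply, rankOne_apply, coe_innerSL_apply,
    real_inner_comm]
  module

theorem lapBel_eq_of_hasFDerivAt_gradient {u : E3 → ℝ} {H : E3 →L[ℝ] E3} {x : E3}
    (hH : HasFDerivAt (gradient u) H x) (hx : ‖x‖ = 1) :
    lapBel u x = LinearMap.trace ℝ E3 H - 2 * ⟪x, gradient u x⟫ - ⟪x, H x⟫ := by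
  rw [lapBel, trProjJac_eq_trace_sub, (hasFDerivAt_sphProj hH).fderiv]
  generalize gradient u x = g
  set T := H - ⟪x, g⟫ • ContinuousLinearMap.id ℝ E3 - rankOne ℝ x g
      - ((innerSL ℝ x).comp H).smulRight x
  have htrace : LinearMap.trace ℝ E3 T
      = LinearMap.trace ℝ E3 H - 3 * ⟪x, g⟫ - ⟪x, g⟫ - ⟪x, H x⟫ := by
    simp [T, trace_rankOne, LinearMap.trace_smulRight, real_inner_comm, mul_comm]
  have hquad : ⟪x, T x⟫ = ⟪x, H x⟫ - ⟪x, g⟫ - ⟪x, g⟫ - ⟪x, H x⟫ := by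
    simp [T, inner_sub_right, inner_smul_right, hx, real_inner_comm]
  rw [htrace, hquad]
  ring

section Kent

variable {E : Type*} [NormedAddCommGroup E] [InnerProductSpace ℝ E]

def kentHessian (α : ℝ) (γ₁ γ₂ : E) : E →L[ℝ] E :=
  (2 * α) • (rankOne ℝ γ₁ γ₁ - rankOne ℝ γ₂ γ₂)

theorem inner_kentHessian_apply_self (α : ℝ) (γ₁ γ₂ x : E) :
    ⟪x, kentHessian α γ₁ γ₂ x⟫ = 2 * α * (⟪γ₁, x⟫ ^ 2 - ⟪γ₂, x⟫ ^ 2) := by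
  simp only [kentHessian, smul_apply, sub_apply, rankOne_apply, real_inner_smul_right,
    inner_sub_right, real_inner_comm x]
  ring

theorem trace_kentHessian [FiniteDimensional ℝ E] (α : ℝ) (γ₁ γ₂ : E) :
    LinearMap.trace ℝ E (kentHessian α γ₁ γ₂) = 2 * α * (‖γ₁‖ ^ 2 - ‖γ₂‖ ^ 2) := by
  simp [kentHessian, trace_rankOne, mul_sub]

theorem hasGradientAt_kent [CompleteSpace E] (κ α : ℝ) (μ γ₁ γ₂ y : E) :
    HasGradientAt (fun z => κ * ⟪μ, z⟫ + α * (⟪γ₁, z⟫ ^ 2 - ⟪γ₂, z⟫ ^ 2))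
      (κ • μ + kentHessian α γ₁ γ₂ y) y := by
  rw [hasGradientAt_iff_hasFDerivAt]
  have hsq (γ : E) := (innerSL ℝ γ).hasFDerivAt (x := y) |>.pow 2
  refine ((innerSL ℝ μ).hasFDerivAt.const_mul κ |>.add
    (((hsq γ₁).sub (hsq γ₂)).const_mul α)).congr_fderiv ?_
  ext v
  simp only [coe_innerSL_apply, nsmul_eq_mul, Nat.cast_ofNat, add_apply, smul_apply,
    smul_eq_mul, sub_apply, kentHessian, rankOne_apply, map_add, map_smul, map_sub,
    toDual_apply_apply]
  ring

end Kent

/-- **Laplace–Beltrami operator applied to the log unnormalized Kent density:**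
for unit axes `γ₁, γ₂` and unit `x`,
`Δ_M u(x) = −2κ⟨μ,x⟩ − 6α(⟨γ₁,x⟩² − ⟨γ₂,x⟩²)`. -/
theorem kent_laplace_beltrami
    (μ γ₁ γ₂ : E3) (hγ₁ : ‖γ₁‖ = 1) (hγ₂ : ‖γ₂‖ = 1) (κ α : ℝ)
    (u : E3 → ℝ) (hu : ∀ x, u x = κ * ⟪μ, x⟫ + α * (⟪γ₁, x⟫ ^ 2 - ⟪γ₂, x⟫ ^ 2))
    (x : E3) (hx : ‖x‖ = 1) :
    lapBel u x = -2 * (κ * ⟪μ, x⟫) - 6 * (α * (⟪γ₁, x⟫ ^ 2 - ⟪γ₂, x⟫ ^ 2)) := by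
  have hgrad : gradient u = fun y => κ • μ + kentHessian α γ₁ γ₂ y := by
    rw [funext hu]
    exact funext fun y => (hasGradientAt_kent κ α μ γ₁ γ₂ y).gradient
  have hH : HasFDerivAt (gradient u) (kentHessian α γ₁ γ₂) x := by
    rw [hgrad]
    exact (kentHessian α γ₁ γ₂).hasFDerivAt.const_add _
  rw [lapBel_eq_of_hasFDerivAt_gradient hH hx, hgrad, trace_kentHessian, hγ₁, hγ₂,
    inner_add_right, real_inner_smul_right, inner_kentHessian_apply_self, real_inner_comm]
  ring
end
end

section
/- Let C ⊆ ℝⁿ be a nonempty closed set, let x ∈ ℝⁿ with x ∉ C, and let x̃ ∈ C satisfy ‖x − x̃‖ = inf_{c ∈ C} ‖x − c‖. If the distance function d(y) := inf_{c ∈ C} ‖y − c‖ is differentiable at x, then its gradient at x equals the unit vector (x − x̃)/‖x − x̃‖. -/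
/-!
The distance function `d` is 1-Lipschitz, so its gradient has norm at most 1. Along the
segment from a nearest point `x̃` to `x` it grows with slope exactly `‖x - x̃‖`, so the gradient
pairs to 1 with the unit vector `(x - x̃)/‖x - x̃‖`. Equality in Cauchy–Schwarz then forces the
gradient to be that unit vector.
-/

open Metric AffineMap
open scoped RealInnerProductSpace

section NearestPoint

variable {E : Type*} [NormedAddCommGroup E] [NormedSpace ℝ E] {C : Set E} {x xt : E}

theorem infDist_lineMap_of_dist_eq_infDist (hxt : xt ∈ C) (hmin : dist x xt = infDist x C)
    {s : ℝ} (hs : s ∈ Set.Icc (0 : ℝ) 1) :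
    infDist (lineMap xt x s) C = s * dist x xt := by
  have hleft : dist (lineMap xt x s) xt = s * dist x xt := by
    rw [dist_lineMap_left, Real.norm_of_nonneg hs.1, dist_comm]
  have hright : dist x (lineMap xt x s) = (1 - s) * dist x xt := by
    rw [dist_comm, dist_lineMap_right, Real.norm_of_nonneg (sub_nonneg.2 hs.2), dist_comm]
  have hle : infDist (lineMap xt x s) C ≤ s * dist x xt :=
    hleft ▸ infDist_le_dist_of_mem hxt
  have hge : infDist x C ≤ infDist (lineMap xt x s) C + dist x (lineMap xt x s) :=
    infDist_le_infDist_add_dist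
  rw [← hmin, hright] at hge
  linarith

/-- The slope is read off at the endpoint `s = 1` of the segment, where the one-sided derivative
along `[0, 1]` already determines the full one. -/
theorem fderiv_infDist_apply_sub_of_dist_eq_infDist (hxt : xt ∈ C)
    (hmin : dist x xt = infDist x C) (hdiff : DifferentiableAt ℝ (infDist · C) x) :
    fderiv ℝ (infDist · C) x (x - xt) = dist x xt := by
  have hchain : HasDerivWithinAt (fun s : ℝ => infDist (lineMap xt x s) C)
      (fderiv ℝ (infDist · C) x (x - xt)) (Set.Icc 0 1) 1 := by
    have hF : HasFDerivAt (infDist · C) (fderiv ℝ (infDist · C) x)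
        (lineMap xt x (1 : ℝ)) := by
      rw [lineMap_apply_one]
      exact hdiff.hasFDerivAt
    exact (hF.comp_hasDerivAt 1 hasDerivAt_lineMap).hasDerivWithinAt
  have hlinear : HasDerivWithinAt (fun s : ℝ => infDist (lineMap xt x s) C)
      (dist x xt) (Set.Icc 0 1) 1 := by
    refine ((hasDerivAt_mul_const (dist x xt)).hasDerivWithinAt).congr
      (fun s hs => infDist_lineMap_of_dist_eq_infDist hxt hmin hs) ?_
    exact infDist_lineMap_of_dist_eq_infDist hxt hmin ⟨zero_le_one, le_rfl⟩
  exact (uniqueDiffOn_Icc zero_lt_one 1 ⟨zero_le_one, le_rfl⟩).eq_deriv _ hchain hlinear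

end NearestPoint

section Gradient

variable {F : Type*} [NormedAddCommGroup F] [InnerProductSpace ℝ F]

theorem eq_of_norm_le_one_of_inner_eq_one {g u : F} (hg : ‖g‖ ≤ 1) (hu : ‖u‖ = 1)
    (hgu : ⟪g, u⟫ = 1) : g = u := by
  have hg_one : ‖g‖ = 1 := by
    refine le_antisymm hg ?_
    calc 1 = ⟪g, u⟫ := hgu.symm
      _ ≤ ‖g‖ * ‖u‖ := real_inner_le_norm g u
      _ = ‖g‖ := by rw [hu, mul_one]
  exact (inner_eq_one_iff_of_norm_eq_one hg_one hu).mp hgu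

theorem norm_gradient_le_of_lipschitz [CompleteSpace F] {f : F → ℝ} {K : NNReal}
    (hf : LipschitzWith K f) (x : F) : ‖gradient f x‖ ≤ K := by
  rw [gradient, LinearIsometryEquiv.norm_map]
  exact norm_fderiv_le_of_lipschitz ℝ hf

theorem gradient_eq_of_lipschitz_one_of_fderiv_apply_eq_one [CompleteSpace F] {f : F → ℝ}
    (hf : LipschitzWith 1 f) {x u : F} (hu : ‖u‖ = 1) (hfu : fderiv ℝ f x u = 1) :
    gradient f x = u :=
  eq_of_norm_le_one_of_inner_eq_one (norm_gradient_le_of_lipschitz hf x) hu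
    (by rw [gradient, InnerProductSpace.toDual_symm_apply, hfu])

end Gradient

theorem gradient_infDist_eq_unit_direction_general
    {n : ℕ} (C : Set (EuclideanSpace ℝ (Fin n)))
    (x xt : EuclideanSpace ℝ (Fin n)) (hx : x ∉ C) (hxt : xt ∈ C)
    (hmin : ‖x - xt‖ = Metric.infDist x C)
    (hdiff : DifferentiableAt ℝ (fun y => Metric.infDist y C) x) :
    gradient (fun y => Metric.infDist y C) x = ‖x - xt‖⁻¹ • (x - xt) := by
  have hv : x - xt ≠ 0 := sub_ne_zero.mpr fun h => hx (h ▸ hxt)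
  rw [← dist_eq_norm] at hmin
  have hslope := fderiv_infDist_apply_sub_of_dist_eq_infDist hxt hmin hdiff
  rw [dist_eq_norm] at hslope
  refine gradient_eq_of_lipschitz_one_of_fderiv_apply_eq_one (lipschitz_infDist_pt C)
    (norm_smul_inv_norm hv) ?_
  rw [map_smul, hslope, smul_eq_mul, inv_mul_cancel₀ (norm_ne_zero_iff.mpr hv)]

/-- **Gradient of the distance function to a closed set:** if `xt` is a nearest point of the
nonempty closed set `C` to `x ∉ C` and the distance function `y ↦ d(y, C)` is differentiable
at `x`, then its gradient at `x` is the unit vector `(x − xt)/‖x − xt‖`. -/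
theorem gradient_infDist_eq_unit_direction
    {n : ℕ} (C : Set (EuclideanSpace ℝ (Fin n))) (hC : IsClosed C) (hCne : C.Nonempty)
    (x xt : EuclideanSpace ℝ (Fin n)) (hx : x ∉ C) (hxt : xt ∈ C)
    (hmin : ‖x - xt‖ = Metric.infDist x C)
    (hdiff : DifferentiableAt ℝ (fun y => Metric.infDist y C) x) :
    gradient (fun y => Metric.infDist y C) x = ‖x - xt‖⁻¹ • (x - xt) :=
  gradient_infDist_eq_unit_direction_general C x xt hx hxt hmin hdiff
end
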